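/- arXiv:2511.06862 — 3 statements merged into one kernel-verified Lean document; each statement's English description precedes it below -/
import Mathlib

section
/- Suppose the local respect condition LR holds for a state machine M with information-flow configuration Info. If dom(a) ∉ sources(a :: as, d), then for every state s, every s' ∈ step(s, a), and every domain u ∈ sources(as, d), the states s and s' are u-indistinguishable: s ∼ᵘ s'. -/
/-- `sources dom flow as d` : the set of domains allowed to transfer
information to domain `d` over the action trace `as`. -/
def sources {A D : Type*} (dom : A → D) (flow : D → D → Prop) :
    List A → D → Set D
  | [], d => {d}
  | a :: as, d =>
      sources dom flow as d ∪
        {w | w = dom a ∧ ∃ v, flow w v ∧ v ∈ sources dom flow as d}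

/-- Local respect: an action may affect a domain `d` only if the acting
domain is allowed to send information to `d`. -/
def LR {S A D : Type*} (step : S → A → Set S) (dom : A → D)
    (flow : D → D → Prop) (ind : D → S → S → Prop) : Prop :=
  ∀ a d s s', s' ∈ step s a → ¬ flow (dom a) d → ind d s s'

theorem not_flow_of_dom_notMem_sources_cons {A D : Type*} {dom : A → D} {flow : D → D → Prop}
    {a : A} {as : List A} {d u : D} (hnot : dom a ∉ sources dom flow (a :: as) d)
    (hu : u ∈ sources dom flow as d) : ¬ flow (dom a) u :=
  fun hflow => hnot (Or.inr ⟨rfl, u, hflow, hu⟩)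

theorem stmt_3_general {S A D : Type*}
    (step : S → A → Set S) (dom : A → D) (flow : D → D → Prop)
    (ind : D → S → S → Prop)
    (hLR : LR step dom flow ind)
    (a : A) (as : List A) (d : D)
    (hnot : dom a ∉ sources dom flow (a :: as) d)
    (s s' : S) (hstep : s' ∈ step s a)
    (u : D) (hu : u ∈ sources dom flow as d) :
    ind u s s' :=
  hLR a u s s' hstep (not_flow_of_dom_notMem_sources_cons hnot hu)

theorem stmt_3 {S A D : Type*}
    (step : S → A → Set S) (dom : A → D) (flow : D → D → Prop)
    (ind : D → S → S → Prop) (hequiv : ∀ d, Equivalence (ind d))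
    (hLR : LR step dom flow ind)
    (a : A) (as : List A) (d : D)
    (hnot : dom a ∉ sources dom flow (a :: as) d)
    (s s' : S) (hstep : s' ∈ step s a)
    (u : D) (hu : u ∈ sources dom flow as d) :
    ind u s s' :=
  stmt_3_general step dom flow ind hLR a as d hnot s s' hstep u hu
end

section
/- Suppose both the step-consistency condition SC and the local respect condition LR hold for a state machine M with information-flow configuration Info. Then for every action list as, every domain d, and all states s, t, if s ∼ᵘ t for every domain u ∈ sources(as, d), then every state s' ∈ run(s, as) and every state t' ∈ run(t, ipurge(as, d)) satisfy s' ∼ᵈ t'. -/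
open Classical in
/-- `ipurge dom flow as d` : the purged trace retaining the actions whose
domain belongs to `sources`. -/
noncomputable def ipurge {A D : Type*} (dom : A → D) (flow : D → D → Prop) :
    List A → D → List A
  | [], _ => []
  | a :: as, d =>
      if dom a ∈ sources dom flow (a :: as) d then a :: ipurge dom flow as d
      else ipurge dom flow as d

/-- Multi-step execution. -/
def run {S A : Type*} (step : S → A → Set S) : S → List A → Set S
  | s, [] => {s}
  | s, a :: as => ⋃ s' ∈ step s a, run step s' as

/-- Step consistency. -/
def SC {S A D : Type*} (step : S → A → Set S) (dom : A → D)
    (flow : D → D → Prop) (ind : D → S → S → Prop) : Prop :=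
  ∀ a d s₁ s₂ s₁' s₂', ind d s₁ s₂ → s₁' ∈ step s₁ a → s₂' ∈ step s₂ a →
    (flow (dom a) d → ind (dom a) s₁ s₂) → ind d s₁' s₂'

/-!
Induction on the trace, with the invariant that the two runs agree on every domain in the
sources of the remaining trace. An action kept by `ipurge` is executed in both runs, and step
consistency preserves the invariant. A purged action is executed only in the first run; its
domain flows to no remaining source (otherwise it would be a source itself), so by local
respect the step is invisible to all of them.
-/

section Unwinding

variable {S A D : Type*} {step : S → A → Set S} {dom : A → D} {flow : D → D → Prop}
  {ind : D → S → S → Prop} {a : A} {as : List A} {d : D}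

theorem mem_run_cons {s s' : S} :
    s' ∈ run step s (a :: as) ↔ ∃ s₁ ∈ step s a, s' ∈ run step s₁ as := by
  simp only [run, Set.mem_iUnion, exists_prop]

theorem sources_subset_sources_cons :
    sources dom flow as d ⊆ sources dom flow (a :: as) d :=
  Set.subset_union_left

theorem dom_mem_sources_cons {v : D} (hv : v ∈ sources dom flow as d)
    (hflow : flow (dom a) v) : dom a ∈ sources dom flow (a :: as) d :=
  Or.inr ⟨rfl, v, hflow, hv⟩

theorem ipurge_cons_of_mem (h : dom a ∈ sources dom flow (a :: as) d) :
    ipurge dom flow (a :: as) d = a :: ipurge dom flow as d := by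
  rw [ipurge, if_pos h]

theorem ipurge_cons_of_not_mem (h : dom a ∉ sources dom flow (a :: as) d) :
    ipurge dom flow (a :: as) d = ipurge dom flow as d := by
  rw [ipurge, if_neg h]

theorem SC.agree_sources_of_step (hSC : SC step dom flow ind) {s t s₁ t₁ : S}
    (hst : ∀ u ∈ sources dom flow (a :: as) d, ind u s t)
    (hs : s₁ ∈ step s a) (ht : t₁ ∈ step t a) :
    ∀ u ∈ sources dom flow as d, ind u s₁ t₁ := fun u hu =>
  hSC a u s t s₁ t₁ (hst u (sources_subset_sources_cons hu)) hs ht fun hflow =>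
    hst (dom a) (dom_mem_sources_cons hu hflow)

theorem LR.agree_sources_of_step_of_not_mem (hLR : LR step dom flow ind)
    (hequiv : ∀ d, Equivalence (ind d)) (hdom : dom a ∉ sources dom flow (a :: as) d)
    {s t s₁ : S} (hst : ∀ u ∈ sources dom flow (a :: as) d, ind u s t)
    (hs : s₁ ∈ step s a) :
    ∀ u ∈ sources dom flow as d, ind u s₁ t := fun u hu =>
  have hs₁ : ind u s s₁ := hLR a u s s₁ hs fun hflow => hdom (dom_mem_sources_cons hu hflow)
  (hequiv u).trans ((hequiv u).symm hs₁) (hst u (sources_subset_sources_cons hu))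

end Unwinding

theorem stmt_4 {S A D : Type*}
    (step : S → A → Set S) (dom : A → D) (flow : D → D → Prop)
    (ind : D → S → S → Prop) (hequiv : ∀ d, Equivalence (ind d))
    (hSC : SC step dom flow ind) (hLR : LR step dom flow ind)
    (as : List A) (d : D) (s t : S)
    (hsrc : ∀ u ∈ sources dom flow as d, ind u s t)
    (s' : S) (hs' : s' ∈ run step s as)
    (t' : S) (ht' : t' ∈ run step t (ipurge dom flow as d)) :
    ind d s' t' := by
  induction as generalizing s t with
  | nil =>
    obtain rfl : s' = s := hs'
    obtain rfl : t' = t := ht'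
    exact hsrc d rfl
  | cons a as ih =>
    obtain ⟨s₁, hs₁, hs'⟩ := mem_run_cons.1 hs'
    by_cases hdom : dom a ∈ sources dom flow (a :: as) d
    · rw [ipurge_cons_of_mem hdom] at ht'
      obtain ⟨t₁, ht₁, ht'⟩ := mem_run_cons.1 ht'
      exact ih s₁ t₁ (hSC.agree_sources_of_step hsrc hs₁ ht₁) hs' ht'
    · rw [ipurge_cons_of_not_mem hdom] at ht'
      exact ih s₁ t (hLR.agree_sources_of_step_of_not_mem hequiv hdom hsrc hs₁) hs' ht'
end

section
/- In the lock-protected message-queue model, the rely and guarantee conditions of different CPUs are compatible: for all CPUs κ ≠ κ', G(κ) ⊆ R(κ'). -/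
/-- Concrete kernel state: actual queue contents, ghost observable queue
contents, queue sizes, and a lock per queue. -/
structure CState (Q Msg CPU : Type*) where
  que : Q → List Msg
  obq : Q → List Msg
  size : Q → ℕ
  lock : Q → Option CPU

variable {Q Msg CPU : Type*}

/-- The rely condition of CPU `κ`: while `κ` holds the lock of a queue, the
environment leaves that queue's contents, observable contents and size
unchanged. -/
def Rely (κ : CPU) : Set (CState Q Msg CPU × CState Q Msg CPU) :=
  {p | ∀ q, p.1.lock q = some κ →
    p.2.que q = p.1.que q ∧ p.2.obq q = p.1.obq q ∧ p.2.size q = p.1.size q}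

/-- The guarantee condition of CPU `κ`: it either stutters, acquires a free
lock, updates the contents/size of a queue whose lock it holds, or releases
a lock it holds while updating the observable contents of that queue. -/
def Guar [DecidableEq Q] (κ : CPU) :
    Set (CState Q Msg CPU × CState Q Msg CPU) :=
  {p | p.2 = p.1 ∨
    (∃ q, p.1.lock q = none ∧
      p.2 = { p.1 with lock := Function.update p.1.lock q (some κ) }) ∨
    (∃ q nque nsize, p.1.lock q = some κ ∧
      p.2 = { p.1 with que := Function.update p.1.que q nque,
                       size := Function.update p.1.size q nsize }) ∨
    (∃ q nobq, p.1.lock q = some κ ∧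
      p.2 = { p.1 with lock := Function.update p.1.lock q none,
                       obq := Function.update p.1.obq q nobq })}

theorem Guar.que_obq_size_eq_of_lock_ne [DecidableEq Q] {κ : CPU}
    {p : CState Q Msg CPU × CState Q Msg CPU} (hp : p ∈ Guar κ) {q : Q}
    (hq : p.1.lock q ≠ some κ) :
    p.2.que q = p.1.que q ∧ p.2.obq q = p.1.obq q ∧ p.2.size q = p.1.size q := by
  rcases hp with h | ⟨r, -, h⟩ | ⟨r, nque, nsize, hr, h⟩ | ⟨r, nobq, hr, h⟩
  · simp only [h, and_self]
  · simp only [h, and_self]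
  · have hqr : q ≠ r := by rintro rfl; exact hq hr
    simp only [h, Function.update_of_ne hqr, and_self]
  · have hqr : q ≠ r := by rintro rfl; exact hq hr
    simp only [h, Function.update_of_ne hqr, and_self]

/-- Rely and guarantee conditions of different CPUs are compatible. -/
theorem stmt_17 [DecidableEq Q] (κ κ' : CPU) (hne : κ ≠ κ') :
    (Guar κ : Set (CState Q Msg CPU × CState Q Msg CPU)) ⊆ Rely κ' := by
  intro p hp q hq
  exact Guar.que_obq_size_eq_of_lock_ne hp (hq ▸ (Option.some_injective _).ne hne.symm)
end
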